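/- arXiv:1203.4516 — 5 statements merged into one kernel-verified Lean document; each statement's English description precedes it below -/
import Mathlib

section
/- Let f : ℕ → ℕ satisfy f(1) = 1, f(mn) = f(m)·f(n) for all m, n ≥ 1, and suppose f is strictly increasing on the positive integers (f(m) < f(n) whenever 1 ≤ m < n). Then there exists a positive integer r such that f(N) = N^r for every N ≥ 1. -/
/-!
Comparing `n ^ k` with the powers of `2` and applying `f`, which is multiplicative and reflects
the order, shows that `log (f n) / log (f 2)` and `log n / log 2` lie in the same intervals
`[l / k, (l + 1) / k]`, so they coincide and `f n = n ^ c` with `c = log₂ (f 2)`.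
The exponent is an integer: for `k = ⌈c⌉₊` the `k`-th forward difference of `n ↦ n ^ c` is an
integer at every `n ≥ 1`, and by the mean value theorem it equals
`c (c - 1) ⋯ (c - k + 1) ξ ^ (c - k)` for some `ξ ≥ n`. If `c < k` this lies in `(0, 1)`
for large `n`.
-/

open Real Filter Finset fwdDiff

lemma hasDerivAt_fwdDiff_iter {g g' : ℝ → ℝ} {a : ℝ} (hg : ∀ y, a < y → HasDerivAt g (g' y) y)
    (k : ℕ) {x : ℝ} (hx : a < x) : HasDerivAt ((Δ_[1])^[k] g) ((Δ_[1])^[k] g' x) x := by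
  induction k generalizing x with
  | zero => exact hg x hx
  | succ k ih =>
    rw [Function.iterate_succ', Function.comp_apply, Function.comp_apply]
    exact (HasDerivAt.comp_add_const x 1 (ih (by linarith))).sub (ih hx)

lemma exists_fwdDiff_iter_rpow_eq (k : ℕ) (c : ℝ) {x : ℝ} (hx : 0 < x) :
    ∃ ξ ∈ Set.Icc x (x + k),
      (Δ_[1])^[k] (· ^ c) x = (∏ j ∈ range k, (c - j)) * ξ ^ (c - k) := by
  induction k generalizing c x with
  | zero => exact ⟨x, by simp, by simp⟩
  | succ k ih =>
    have hderiv : ∀ y, 0 < y →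
        HasDerivAt ((Δ_[1])^[k] (· ^ c)) (c * (Δ_[1])^[k] (· ^ (c - 1)) y) y := fun y hy ↦ by
      have := hasDerivAt_fwdDiff_iter (g' := c • (· ^ (c - 1)))
        (fun y hy ↦ hasDerivAt_rpow_const (Or.inl hy.ne')) k hy
      rwa [fwdDiff_iter_const_smul, Pi.smul_apply, smul_eq_mul] at this
    obtain ⟨η, hη, hslope⟩ := exists_hasDerivAt_eq_slope _ _ (lt_add_one x)
      (fun y hy ↦ (hderiv y (hx.trans_le hy.1)).continuousAt.continuousWithinAt)
      (fun y hy ↦ hderiv y (hx.trans hy.1))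
    obtain ⟨ξ, ⟨hξl, hξr⟩, hξ⟩ := ih (c - 1) (hx.trans hη.1)
    refine ⟨ξ, ⟨by linarith [hη.1], by push_cast; linarith [hη.2]⟩, ?_⟩
    have hstep : (Δ_[1])^[k + 1] (· ^ c) x = c * (Δ_[1])^[k] (· ^ (c - 1)) η := by
      rw [Function.iterate_succ_apply', fwdDiff, hslope, add_sub_cancel_left, div_one]
    have hprod : ∏ j ∈ range k, (c - 1 - j) = ∏ j ∈ range k, (c - (j + 1 : ℕ)) :=
      prod_congr rfl fun j _ ↦ by push_cast; rw [sub_sub, add_comm]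
    rw [hstep, hξ, hprod, prod_range_succ', sub_sub c 1, add_comm 1]
    push_cast
    ring

lemma exists_fwdDiff_iter_eq_intCast {g : ℝ → ℝ} (hg : ∀ n : ℕ, 1 ≤ n → ∃ z : ℤ, g n = z)
    (k : ℕ) {n : ℕ} (hn : 1 ≤ n) : ∃ z : ℤ, (Δ_[1])^[k] g n = z := by
  induction k generalizing n with
  | zero => exact hg n hn
  | succ k ih =>
    obtain ⟨z₁, hz₁⟩ := ih (n := n + 1) (by omega)
    obtain ⟨z₂, hz₂⟩ := ih hn
    refine ⟨z₁ - z₂, ?_⟩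
    rw [Function.iterate_succ_apply', fwdDiff, hz₂, ← Nat.cast_add_one, hz₁, Int.cast_sub]

theorem Real.exists_natCast_eq_of_forall_rpow_eq_intCast {c : ℝ}
    (h : ∀ n : ℕ, 1 ≤ n → ∃ z : ℤ, (n : ℝ) ^ c = z) : ∃ k : ℕ, c = k := by
  set k := ⌈c⌉₊
  refine ⟨k, (Nat.le_ceil c).eq_or_lt.resolve_right fun hck ↦ ?_⟩
  set P := ∏ j ∈ range k, (c - j)
  have hP : 0 < P := prod_pos fun j hj ↦ sub_pos.2 (Nat.lt_ceil.1 (mem_range.1 hj))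
  have hsmall : ∀ᶠ n : ℕ in atTop, P * (n : ℝ) ^ (c - k) < 1 := by
    have := ((tendsto_rpow_neg_atTop (sub_pos.2 hck)).comp
      tendsto_natCast_atTop_atTop).const_mul P
    simp only [mul_zero, neg_sub] at this
    exact this.eventually_lt_const one_pos
  obtain ⟨n, hPn, hn1⟩ := (hsmall.and (eventually_ge_atTop 1)).exists
  have hnpos : (0 : ℝ) < n := by exact_mod_cast hn1
  obtain ⟨ξ, ⟨hξ, -⟩, hΔ⟩ := exists_fwdDiff_iter_rpow_eq k c hnpos
  obtain ⟨z, hz⟩ := exists_fwdDiff_iter_eq_intCast (g := (· ^ c)) h k hn1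
  have hpos : (0 : ℝ) < z := by
    rw [← hz, hΔ]
    exact mul_pos hP (rpow_pos_of_pos (hnpos.trans_le hξ) _)
  have hlt : (z : ℝ) < 1 := by
    rw [← hz, hΔ]
    refine lt_of_le_of_lt (mul_le_mul_of_nonneg_left ?_ hP.le) hPn
    exact rpow_le_rpow_of_nonpos hnpos hξ (by linarith)
  have : (0 : ℤ) < z ∧ z < 1 := ⟨by exact_mod_cast hpos, by exact_mod_cast hlt⟩
  omega

lemma le_of_forall_natCast_le_mul_imp {u v : ℝ} (hv : 0 ≤ v)
    (h : ∀ k l : ℕ, (l : ℝ) ≤ k * v → (l : ℝ) ≤ k * u) : v ≤ u := by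
  by_contra! huv
  obtain ⟨k, hk⟩ := exists_nat_gt (1 / (v - u))
  rw [div_lt_iff₀ (sub_pos.2 huv)] at hk
  have hl := h k ⌊k * v⌋₊ (Nat.floor_le (by positivity))
  have := Nat.lt_floor_add_one (k * v)
  linarith

lemma natCast_le_mul_log_div_log_iff {a x : ℝ} (ha : 1 < a) (hx : 0 < x) (k l : ℕ) :
    (l : ℝ) ≤ k * (log x / log a) ↔ a ^ l ≤ x ^ k := by
  rw [mul_div_assoc', le_div_iff₀ (log_pos ha), ← log_pow, ← log_pow,
    log_le_log_iff (by positivity) (by positivity)]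

lemma log_div_log_eq_of_forall_pow_le_iff {a b x y : ℝ} (ha : 1 < a) (hb : 1 < b) (hx : 1 ≤ x)
    (hy : 1 ≤ y) (h : ∀ k l : ℕ, a ^ l ≤ x ^ k ↔ b ^ l ≤ y ^ k) :
    log x / log a = log y / log b := by
  have hx₀ : 0 < x := zero_lt_one.trans_le hx
  have hy₀ : 0 < y := zero_lt_one.trans_le hy
  refine le_antisymm
    (le_of_forall_natCast_le_mul_imp (div_nonneg (log_nonneg hx) (log_pos ha).le) fun k l ↦ ?_)
    (le_of_forall_natCast_le_mul_imp (div_nonneg (log_nonneg hy) (log_pos hb).le) fun k l ↦ ?_)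
  · rw [natCast_le_mul_log_div_log_iff ha hx₀, natCast_le_mul_log_div_log_iff hb hy₀, h]
    exact id
  · rw [natCast_le_mul_log_div_log_iff ha hx₀, natCast_le_mul_log_div_log_iff hb hy₀, h]
    exact id

lemma map_pow_of_map_mul {f : ℕ → ℕ} (h1 : f 1 = 1)
    (hmul : ∀ m n : ℕ, 1 ≤ m → 1 ≤ n → f (m * n) = f m * f n) {m : ℕ} (hm : 1 ≤ m) (k : ℕ) :
    f (m ^ k) = f m ^ k := by
  induction k with
  | zero => simpa using h1
  | succ k ih => rw [pow_succ, hmul _ _ (Nat.one_le_pow _ _ hm) hm, ih, pow_succ]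

lemma cast_eq_rpow_of_map_mul_of_strictMonoOn {f : ℕ → ℕ} (h1 : f 1 = 1)
    (hmul : ∀ m n : ℕ, 1 ≤ m → 1 ≤ n → f (m * n) = f m * f n) (hf : StrictMonoOn f (Set.Ici 1))
    {n : ℕ} (hn : 1 ≤ n) : (f n : ℝ) = n ^ logb 2 (f 2) := by
  have h1mem : 1 ∈ Set.Ici 1 := Set.mem_Ici.2 le_rfl
  have hf2 : (1 : ℝ) < f 2 := by exact_mod_cast h1 ▸ hf h1mem (Set.mem_Ici.2 one_le_two) one_lt_two
  have hfn : (1 : ℝ) ≤ f n := by exact_mod_cast h1 ▸ hf.monotoneOn h1mem hn hn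
  have hlog : log (f n) / log (f 2) = log n / log 2 :=
    log_div_log_eq_of_forall_pow_le_iff hf2 one_lt_two hfn (by exact_mod_cast hn) fun k l ↦ by
      norm_cast
      rw [← map_pow_of_map_mul h1 hmul one_le_two, ← map_pow_of_map_mul h1 hmul hn,
        hf.le_iff_le (Nat.one_le_pow _ _ two_pos) (Nat.one_le_pow _ _ hn)]
  rw [div_eq_div_iff (log_pos hf2).ne' (log_pos one_lt_two).ne'] at hlog
  rw [rpow_def_of_pos (by exact_mod_cast hn), logb, ← exp_log (by linarith : (0 : ℝ) < f n)]
  congr 1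
  rw [mul_div_assoc', eq_div_iff (log_pos one_lt_two).ne']
  linarith

/-- Hardy's arithmetic lemma: a multiplicative, strictly increasing function
`f : ℕ → ℕ` with `f 1 = 1` is of the form `N ↦ N ^ r` for some positive integer `r`. -/
theorem stmt_0 (f : ℕ → ℕ) (h1 : f 1 = 1)
    (hmul : ∀ m n : ℕ, 1 ≤ m → 1 ≤ n → f (m * n) = f m * f n)
    (hmono : ∀ m n : ℕ, 1 ≤ m → m < n → f m < f n) :
    ∃ r : ℕ, 0 < r ∧ ∀ N : ℕ, 1 ≤ N → f N = N ^ r := by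
  have hf : StrictMonoOn f (Set.Ici 1) := fun m hm n _ hmn ↦ hmono m n hm hmn
  have hrpow := fun n (hn : 1 ≤ n) ↦ cast_eq_rpow_of_map_mul_of_strictMonoOn h1 hmul hf hn
  obtain ⟨r, hr⟩ := Real.exists_natCast_eq_of_forall_rpow_eq_intCast fun n hn ↦
    ⟨f n, (hrpow n hn).symm⟩
  have hpow : ∀ N, 1 ≤ N → f N = N ^ r := fun N hN ↦ by
    have := hrpow N hN
    rw [hr, rpow_natCast] at this
    exact_mod_cast this
  refine ⟨r, Nat.pos_of_ne_zero fun hr0 ↦ ?_, hpow⟩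
  have := hmono 1 2 le_rfl one_lt_two
  rw [h1, hpow 2 one_le_two, hr0, pow_zero] at this
  exact lt_irrefl 1 this
end

section
/- Let V be a finite-dimensional real vector space, S ⊆ V a compact convex set, and G a group of linear bijections of V each of which maps S onto S and which acts transitively on the set of extreme points of S. Let μ ∈ S satisfy Tμ = μ for all T ∈ G. Suppose ω_1, …, ω_n are perfectly distinguishable extreme points of S with μ = (1/n)·∑_{i=1}^n ω_i. Then every perfectly distinguishable family φ_1, …, φ_N of extreme points of S satisfies N ≤ n. -/
/-- If `n` perfectly distinguishable pure states average to the invariant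
(maximally mixed) state `μ`, then any family of perfectly distinguishable
pure states has at most `n` members. -/
theorem stmt_1 {V : Type*} [NormedAddCommGroup V] [NormedSpace ℝ V] [FiniteDimensional ℝ V]
    (S : Set V) (hScompact : IsCompact S) (hSconv : Convex ℝ S)
    (G : Subgroup (V ≃ₗ[ℝ] V))
    (hGS : ∀ T ∈ G, T '' S = S)
    (htrans : ∀ x ∈ S.extremePoints ℝ, ∀ y ∈ S.extremePoints ℝ, ∃ T ∈ G, T x = y)
    (μ : V) (hμS : μ ∈ S) (hμfix : ∀ T ∈ G, T μ = μ)
    (n : ℕ) (hn : 0 < n) (ω : Fin n → V)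
    (hωext : ∀ i, ω i ∈ S.extremePoints ℝ)
    (e : Fin n → (V →ₗ[ℝ] ℝ))
    (he0 : ∀ i, ∀ x ∈ S, 0 ≤ e i x)
    (he1 : ∀ x ∈ S, ∑ i, e i x = 1)
    (heδ : ∀ i j, e i (ω j) = if i = j then 1 else 0)
    (hμ : μ = (n : ℝ)⁻¹ • ∑ i, ω i)
    (N : ℕ) (φ : Fin N → V)
    (hφext : ∀ i, φ i ∈ S.extremePoints ℝ)
    (g : Fin N → (V →ₗ[ℝ] ℝ))
    (hg0 : ∀ i, ∀ x ∈ S, 0 ≤ g i x)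
    (hg1 : ∀ x ∈ S, ∑ i, g i x = 1)
    (hgδ : ∀ i j, g i (φ j) = if i = j then 1 else 0) :
    N ≤ n := by
  -- Key claim: each `g i μ` is at least `1/n`.
  have key : ∀ i : Fin N, (n : ℝ)⁻¹ ≤ g i μ := by
    intro i
    obtain ⟨T, hT, hTω⟩ :=
      htrans (ω ⟨0, hn⟩) (hωext _) (φ i) (hφext i)
    have hmem : ∀ j, T (ω j) ∈ S := fun j => by
      rw [← hGS T hT]; exact ⟨ω j, (hωext j).1, rfl⟩
    have hμ' : g i μ = (n : ℝ)⁻¹ * ∑ j, g i (T (ω j)) := by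
      conv_lhs => rw [← hμfix T hT, hμ]
      rw [map_smul, map_smul, map_sum, map_sum]
      simp [smul_eq_mul]
    rw [hμ']
    have h1 : g i (T (ω ⟨0, hn⟩)) ≤ ∑ j, g i (T (ω j)) :=
      Finset.single_le_sum (fun j _ => hg0 i _ (hmem j)) (Finset.mem_univ _)
    have : (1 : ℝ) ≤ ∑ j, g i (T (ω j)) := by
      rw [hTω, hgδ i i] at h1; simpa using h1
    have hninv : (0 : ℝ) < (n : ℝ)⁻¹ := by positivity
    nlinarith
  have hsum : (N : ℝ) * (n : ℝ)⁻¹ ≤ 1 := by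
    calc (N : ℝ) * (n : ℝ)⁻¹ = ∑ _i : Fin N, (n : ℝ)⁻¹ := by
          simp [Finset.sum_const, mul_comm]
      _ ≤ ∑ i, g i μ := Finset.sum_le_sum fun i _ => key i
      _ = 1 := hg1 μ hμS
  have hnpos : (0 : ℝ) < n := by exact_mod_cast hn
  have : (N : ℝ) ≤ n := by
    rw [mul_inv_le_iff₀ hnpos, one_mul] at hsum
    exact hsum
  exact_mod_cast this
end

section
/- Let V be a finite-dimensional real normed vector space, G a compact subgroup of the group GL(V) of linear automorphisms of V (with its natural topology), and S ⊆ V a nonempty compact convex set with T(S) = S for all T ∈ G. Suppose G acts transitively on the set of extreme points of S. Then there exists exactly one point μ ∈ S with Tμ = μ for all T ∈ G. -/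
/-!
Average over the group with Haar measure: `A = ∫ ρ g dμ` for a left-invariant probability `μ`,
and `B = ∫ ρ g dμ⁻¹` for the right-invariant one. Then `A x₀` is a fixed point in `S` for any
`x₀ ∈ S`. The operator `B` fixes every fixed point and is constant on the orbit of an extreme
point, so by transitivity it is constant on the extreme points. By Krein–Milman it is then
constant on `S`, so every fixed point in `S` equals `B x₀ = A x₀`.
-/

open MeasureTheory Set

section KreinMilman

variable {E F : Type*} [AddCommGroup E] [Module ℝ E] [TopologicalSpace E] [T2Space E]
  [IsTopologicalAddGroup E] [ContinuousSMul ℝ E] [LocallyConvexSpace ℝ E]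
  [AddCommGroup F] [Module ℝ F] [TopologicalSpace F]

theorem ContinuousLinearMap.mapsTo_of_mapsTo_extremePoints (f : E →L[ℝ] F) {S : Set E}
    {C : Set F} (hS : IsCompact S) (hSconv : Convex ℝ S) (hC : Convex ℝ C) (hCc : IsClosed C)
    (h : MapsTo f (S.extremePoints ℝ) C) : MapsTo f S C := by
  rw [← closure_convexHull_extremePoints hS hSconv]
  exact closure_minimal (convexHull_min h (hC.linear_preimage (f : E →ₗ[ℝ] F)))
    (hCc.preimage f.continuous)

end KreinMilman

section GroupAverage

variable {K E : Type*} [Group K] [TopologicalSpace K] [CompactSpace K] [MeasurableSpace K]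
  [OpensMeasurableSpace K] [NormedAddCommGroup E] [NormedSpace ℝ E]
  (μ : Measure K) (ρ : K →* (E →L[ℝ] E))

noncomputable def groupAverage : E →L[ℝ] E := ∫ g, ρ g ∂μ

variable {μ ρ} [IsFiniteMeasure μ] (hρ : Continuous ρ)
include hρ

theorem groupAverage_apply (x : E) : groupAverage μ ρ x = ∫ g, ρ g x ∂μ :=
  ContinuousLinearMap.integral_apply (hρ.integrable_of_hasCompactSupport (.of_compactSpace _)) x

theorem groupAverage_mul [MeasurableMul K] [μ.IsMulRightInvariant] (g : K) :
    groupAverage μ ρ * ρ g = groupAverage μ ρ := by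
  ext x
  rw [mul_apply_eq_comp, groupAverage_apply hρ, groupAverage_apply hρ]
  simp_rw [← mul_apply_eq_comp, ← map_mul]
  exact integral_mul_right_eq_self (fun k ↦ ρ k x) g

variable [CompleteSpace E]

theorem mul_groupAverage [MeasurableMul K] [μ.IsMulLeftInvariant] (g : K) :
    ρ g * groupAverage μ ρ = groupAverage μ ρ := by
  ext x
  rw [mul_apply_eq_comp, groupAverage_apply hρ,
    ← (ρ g).integral_comp_comm ((hρ.clm_apply continuous_const).integrable_of_hasCompactSupport
      (.of_compactSpace _))]
  simp_rw [← mul_apply_eq_comp, ← map_mul]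
  exact integral_mul_left_eq_self (fun k ↦ ρ k x) g

variable [IsProbabilityMeasure μ]

theorem groupAverage_apply_of_forall_apply_eq {x : E} (hx : ∀ g, ρ g x = x) :
    groupAverage μ ρ x = x := by
  simp [groupAverage_apply hρ, hx]

theorem groupAverage_apply_mem {S : Set E} (hS : Convex ℝ S) (hSc : IsClosed S) {x : E}
    (hx : ∀ g, ρ g x ∈ S) : groupAverage μ ρ x ∈ S := by
  rw [groupAverage_apply hρ]
  exact hS.integral_mem hSc (.of_forall hx)
    ((hρ.clm_apply continuous_const).integrable_of_hasCompactSupport (.of_compactSpace _))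

end GroupAverage

theorem existsUnique_fixedPoint_of_extremePoints_transitive {K E : Type*} [Group K]
    [TopologicalSpace K] [IsTopologicalGroup K] [CompactSpace K] [MeasurableSpace K]
    [BorelSpace K] [NormedAddCommGroup E] [NormedSpace ℝ E] [CompleteSpace E]
    (ρ : K →* (E →L[ℝ] E)) (hρ : Continuous ρ) {S : Set E} (hS : S.Nonempty)
    (hSc : IsCompact S) (hSconv : Convex ℝ S) (hρS : ∀ g, MapsTo (ρ g) S S)
    (htrans : ∀ x ∈ S.extremePoints ℝ, ∀ y ∈ S.extremePoints ℝ, ∃ g, ρ g x = y) :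
    ∃! x, x ∈ S ∧ ∀ g, ρ g x = x := by
  obtain ⟨x₀, hx₀⟩ := hSc.extremePoints_nonempty hS
  let μ := Measure.haarMeasure (⊤ : TopologicalSpace.PositiveCompacts K)
  have : IsProbabilityMeasure μ := ⟨Measure.haarMeasure_self⟩
  have : IsProbabilityMeasure μ.inv := by
    rw [Measure.inv]; exact Measure.isProbabilityMeasure_map continuous_inv.aemeasurable
  set A := groupAverage μ ρ
  set B := groupAverage μ.inv ρ
  have hBS : ∀ y ∈ S, B y = B x₀ := by
    refine fun y hy ↦ B.mapsTo_of_mapsTo_extremePoints hSc hSconv (convex_singleton _)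
      isClosed_singleton (fun z hz ↦ ?_) hy
    obtain ⟨g, rfl⟩ := htrans x₀ hx₀ z hz
    exact congr($(groupAverage_mul hρ g) x₀)
  have hB_fix : ∀ y, (∀ g, ρ g y = y) → B y = y := fun y hy ↦
    groupAverage_apply_of_forall_apply_eq hρ hy
  have hA_fix : ∀ g, ρ g (A x₀) = A x₀ := fun g ↦ congr($(mul_groupAverage hρ g) x₀)
  have hA_mem : A x₀ ∈ S := groupAverage_apply_mem hρ hSconv hSc.isClosed
    fun g ↦ hρS g hx₀.1
  refine ⟨A x₀, ⟨hA_mem, hA_fix⟩, fun y ⟨hy, hy_fix⟩ ↦ ?_⟩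
  calc y = B y := (hB_fix y hy_fix).symm
    _ = B (A x₀) := by rw [hBS y hy, hBS _ hA_mem]
    _ = A x₀ := hB_fix _ hA_fix

theorem Submonoid.image_val_units {M : Type*} [Monoid M] (S : Submonoid M)
    (hS : ∀ x ∈ S, ∃ y ∈ S, x * y = 1 ∧ y * x = 1) : Units.val '' (S.units : Set Mˣ) = S := by
  refine Subset.antisymm (image_subset_iff.mpr fun u hu ↦ S.val_mem_of_mem_units hu)
    fun x hx ↦ ?_
  obtain ⟨y, hy, hxy, hyx⟩ := hS x hx
  exact ⟨⟨x, y, hxy, hyx⟩, S.mem_units_of_val_mem_inv_val_mem hx hy, rfl⟩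

theorem Submonoid.isCompact_units {R : Type*} [NormedRing R] [HasSummableGeomSeries R]
    (S : Submonoid R) (hSc : IsCompact (S : Set R))
    (hS : ∀ x ∈ S, ∃ y ∈ S, x * y = 1 ∧ y * x = 1) : IsCompact (S.units : Set Rˣ) := by
  rwa [Units.isOpenEmbedding_val.isInducing.isCompact_iff, S.image_val_units hS]

/-- A compact group of linear automorphisms of a finite-dimensional real normed space,
preserving a nonempty compact convex set `S` and acting transitively on its extreme points,
has a unique fixed point in `S` (the maximally mixed state). -/
theorem stmt_2 {V : Type*} [NormedAddCommGroup V] [NormedSpace ℝ V] [FiniteDimensional ℝ V]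
    (G : Set (V →L[ℝ] V)) (hGcompact : IsCompact G)
    (hid : ContinuousLinearMap.id ℝ V ∈ G)
    (hcomp : ∀ T ∈ G, ∀ U ∈ G, T.comp U ∈ G)
    (hinv : ∀ T ∈ G, ∃ U ∈ G, T.comp U = ContinuousLinearMap.id ℝ V ∧
      U.comp T = ContinuousLinearMap.id ℝ V)
    (S : Set V) (hS : S.Nonempty) (hScompact : IsCompact S) (hSconv : Convex ℝ S)
    (hGS : ∀ T ∈ G, T '' S = S)
    (htrans : ∀ x ∈ S.extremePoints ℝ, ∀ y ∈ S.extremePoints ℝ, ∃ T ∈ G, T x = y) :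
    ∃! μ, μ ∈ S ∧ ∀ T ∈ G, T μ = μ := by
  let M : Submonoid (V →L[ℝ] V) :=
    { carrier := G, mul_mem' := fun hT hU ↦ hcomp _ hT _ hU, one_mem' := hid }
  have : CompactSpace M.units := isCompact_iff_compactSpace.mp (M.isCompact_units hGcompact hinv)
  let _ : MeasurableSpace M.units := borel M.units
  have : BorelSpace M.units := ⟨rfl⟩
  let ρ := (Units.coeHom (V →L[ℝ] V)).comp M.units.subtype
  have hρG : range ρ = G := by
    rw [MonoidHom.coe_comp, range_comp, Subgroup.coe_subtype, Subtype.range_coe]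
    exact M.image_val_units hinv
  rw [← hρG] at hGS htrans ⊢
  simp only [forall_mem_range, exists_range_iff] at hGS htrans ⊢
  exact existsUnique_fixedPoint_of_extremePoints_transitive ρ
    (Units.continuous_val.comp continuous_subtype_val) hS hScompact hSconv
    (fun g ↦ mapsTo_iff_image_subset.mpr (hGS g).subset) htrans
end

section
/- Let V_A and V_B be finite-dimensional real vector spaces, S_A ⊆ V_A and S_B ⊆ V_B nonempty compact convex sets, and 𝟙_A, 𝟙_B linear functionals with 𝟙_A(ω) = 1 for all ω ∈ S_A and 𝟙_B(ω) = 1 for all ω ∈ S_B. Let ω ∈ V_A ⊗ V_B satisfy (E_A ⊗ E_B)(ω) ≥ 0 for every linear functional E_A on V_A that is nonnegative on S_A and every linear functional E_B on V_B that is nonnegative on S_B. Let E_B be an effect on B (a linear functional with 0 ≤ E_B(φ) ≤ 1 for all φ ∈ S_B) such that λ := (𝟙_A ⊗ E_B)(ω) > 0. Then the conditional state ω' := (1/λ)·(id_{V_A} ⊗ E_B)(ω) — where id_{V_A} ⊗ E_B : V_A ⊗ V_B → V_A is the linear map induced by a ⊗ b ↦ E_B(b)·a — lies in S_A. -/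
open TensorProduct

set_option synthInstance.maxHeartbeats 400000 in
/-- When all effects are allowed, conditional states lie in the local state space:
if `ω ∈ V_A ⊗ V_B` is nonnegative on all product functionals that are nonnegative
on the local state spaces, and `E_B` is an effect on `B` with positive outcome
probability `λ = (𝟙_A ⊗ E_B)(ω)`, then the conditional state
`(1/λ)·(id_A ⊗ E_B)(ω)` lies in `S_A`. -/
theorem stmt_7 {VA VB : Type*}
    [NormedAddCommGroup VA] [NormedSpace ℝ VA] [FiniteDimensional ℝ VA]
    [NormedAddCommGroup VB] [NormedSpace ℝ VB] [FiniteDimensional ℝ VB]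
    (SA : Set VA) (hSAne : SA.Nonempty) (hSAc : IsCompact SA) (hSAconv : Convex ℝ SA)
    (SB : Set VB) (hSBne : SB.Nonempty) (hSBc : IsCompact SB) (hSBconv : Convex ℝ SB)
    (uA : VA →ₗ[ℝ] ℝ) (huA : ∀ x ∈ SA, uA x = 1)
    (uB : VB →ₗ[ℝ] ℝ) (huB : ∀ x ∈ SB, uB x = 1)
    (ω : VA ⊗[ℝ] VB)
    (hpos : ∀ EA : VA →ₗ[ℝ] ℝ, (∀ x ∈ SA, 0 ≤ EA x) →
      ∀ EB : VB →ₗ[ℝ] ℝ, (∀ x ∈ SB, 0 ≤ EB x) →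
      0 ≤ TensorProduct.lid ℝ ℝ (TensorProduct.map EA EB ω))
    (EB : VB →ₗ[ℝ] ℝ) (hEB : ∀ x ∈ SB, 0 ≤ EB x ∧ EB x ≤ 1)
    (lam : ℝ) (hlam : lam = TensorProduct.lid ℝ ℝ (TensorProduct.map uA EB ω))
    (hlampos : 0 < lam) :
    lam⁻¹ • (TensorProduct.rid ℝ VA) (TensorProduct.map (LinearMap.id : VA →ₗ[ℝ] VA) EB ω)
      ∈ SA := by
  have key : ∀ (EA : VA →ₗ[ℝ] ℝ) (w : VA ⊗[ℝ] VB),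
      TensorProduct.lid ℝ ℝ (TensorProduct.map EA EB w)
        = EA ((TensorProduct.rid ℝ VA)
            (TensorProduct.map (LinearMap.id : VA →ₗ[ℝ] VA) EB w)) := by
    intro EA w
    induction w using TensorProduct.induction_on with
    | zero => simp only [map_zero, LinearMap.map_zero, LinearEquiv.map_zero]
    | tmul a b => simp [mul_comm]
    | add x y hx hy => simp [hx, hy]
  set v : VA := (TensorProduct.rid ℝ VA)
      (TensorProduct.map (LinearMap.id : VA →ₗ[ℝ] VA) EB ω) with hv
  have huAv : uA v = lam := by rw [hlam, key uA ω]
  have hnn : ∀ EA : VA →ₗ[ℝ] ℝ, (∀ x ∈ SA, 0 ≤ EA x) → 0 ≤ EA v := by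
    intro EA hEA
    have := hpos EA hEA EB (fun x hx => (hEB x hx).1)
    rwa [key EA ω] at this
  by_contra hc
  obtain ⟨f, u, hfu, hs⟩ := geometric_hahn_banach_point_closed hSAconv
    hSAc.isClosed hc
  set EA : VA →ₗ[ℝ] ℝ := (f : VA →ₗ[ℝ] ℝ) - u • uA with hEAdef
  have hEApos : ∀ x ∈ SA, 0 ≤ EA x := by
    intro x hx
    have := hs x hx
    simp [hEAdef, huA x hx]
    linarith
  have h0 := hnn EA hEApos
  have hveq : v = lam • (lam⁻¹ • v) := by
    rw [smul_smul, mul_inv_cancel₀ (ne_of_gt hlampos), one_smul]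
  have hfv : f v = lam * f (lam⁻¹ • v) := by
    conv_lhs => rw [hveq]
    simp
  have hEAv : EA v = f v - u * lam := by
    simp [hEAdef, huAv]
  rw [hEAv, hfv] at h0
  nlinarith [h0, hfu]
end

section
/- Let S_A ⊆ V_A and S_B ⊆ V_B be compact convex subsets of finite-dimensional real vector spaces, with linear unit functionals 𝟙_A, 𝟙_B equal to 1 on S_A, S_B respectively. Let S_{AB} ⊆ V_A ⊗ V_B be a convex set such that every ω ∈ S_{AB} satisfies (𝟙_A ⊗ 𝟙_B)(ω) = 1, and such that for every ω ∈ S_{AB}: for every effect E_B on B with (𝟙_A ⊗ E_B)(ω) > 0 the conditional state (id_{V_A} ⊗ E_B)(ω)/(𝟙_A ⊗ E_B)(ω) lies in S_A, and symmetrically every conditional state on B arising from an effect on A lies in S_B. If ω_A is an extreme point of S_A, ω_B is an extreme point of S_B, and ω_A ⊗ ω_B ∈ S_{AB}, then ω_A ⊗ ω_B is an extreme point of S_{AB}. -/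
/-!
Suppose `ω_A ⊗ ω_B = a ω + b ω'` with `ω, ω'` composite states and `a, b > 0`, `a + b = 1`. Taking
marginals (conditioning on the unit effect) writes `ω_A` and `ω_B` as the same averages of local
states, so by extremality `ω` has marginals `ω_A` and `ω_B`. For an effect `e` on `B` with
`0 < e ω_B < 1`, the `A`-marginal splits as `ω_A = (id ⊗ e) ω + (id ⊗ (𝟙 - e)) ω`, a proper convex
combination of two conditional states, so extremality of `ω_A` gives `(id ⊗ e) ω = e(ω_B) ω_A`.
Since `S_B` is bounded these effects span the dual of `V_B`, hence `(id ⊗ f) ω = f(ω_B) ω_A` for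
every functional `f`, and slicing by a dual basis shows `ω = ω_A ⊗ ω_B`.
-/

open TensorProduct

theorem eq_smul_of_add_eq_mem_extremePoints {𝕜 E : Type*} [Field 𝕜] [PartialOrder 𝕜]
    [IsOrderedRing 𝕜] [AddCommGroup E] [Module 𝕜 E] {S : Set E} {ω a b : E} {p : 𝕜}
    (hω : ω ∈ S.extremePoints 𝕜) (hp₀ : 0 < p) (hp₁ : p < 1)
    (ha : p⁻¹ • a ∈ S) (hb : (1 - p)⁻¹ • b ∈ S) (hab : a + b = ω) : a = p • ω := by
  have hseg : ω ∈ openSegment 𝕜 (p⁻¹ • a) ((1 - p)⁻¹ • b) :=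
    ⟨p, 1 - p, hp₀, sub_pos.2 hp₁, add_sub_cancel p 1, by
      rw [smul_inv_smul₀ hp₀.ne', smul_inv_smul₀ (sub_pos.2 hp₁).ne', hab]⟩
  rw [← hω.2 ha hb hseg, smul_inv_smul₀ hp₀.ne']

theorem LinearMap.apply_eq_of_mem_openSegment {𝕜 E F : Type*} [Semiring 𝕜] [PartialOrder 𝕜]
    [AddCommMonoid E] [Module 𝕜 E] [AddCommMonoid F] [Module 𝕜 F] (L : E →ₗ[𝕜] F)
    {s : Set E} {t : Set F} (hst : Set.MapsTo L s t) {x y z : E} (hz : L z ∈ t.extremePoints 𝕜)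
    (hx : x ∈ s) (hy : y ∈ s) (hzxy : z ∈ openSegment 𝕜 x y) : L x = L z := by
  refine hz.2 (hst hx) (hst hy) ?_
  obtain ⟨a, b, ha, hb, hab, rfl⟩ := hzxy
  exact ⟨a, b, ha, hb, hab, by simp⟩

section Tensor

variable {R M N : Type*} [CommSemiring R] [AddCommMonoid M] [Module R M] [AddCommMonoid N]
  [Module R N]

theorem TensorProduct.lid_map_eq_apply_lid_rTensor (f : M →ₗ[R] R) (g : N →ₗ[R] R)
    (x : M ⊗[R] N) :
    TensorProduct.lid R R (map f g x) = g (TensorProduct.lid R N (f.rTensor N x)) := by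
  induction x using TensorProduct.induction_on <;> simp_all

theorem TensorProduct.ext_of_rid_lTensor [Module.Free R N] {x y : M ⊗[R] N}
    (h : ∀ g : Module.Dual R N,
      TensorProduct.rid R M (g.lTensor M x) = TensorProduct.rid R M (g.lTensor M y)) :
    x = y := by
  classical
  apply (equivFinsuppOfBasisRight (Module.Free.chooseBasis R N)).injective
  ext i
  simp only [equivFinsuppOfBasisRight_apply, h]

end Tensor

-- Strictness gives both `e` and `u - e` positive probability, so both conditional states exist.
def strictEffects {V : Type*} [AddCommGroup V] [Module ℝ V] (S : Set V) :
    Set (Module.Dual ℝ V) :=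
  {e | ∀ x ∈ S, e x ∈ Set.Ioo 0 1}

theorem span_strictEffects_eq_top {V : Type*} [NormedAddCommGroup V] [NormedSpace ℝ V]
    [FiniteDimensional ℝ V] {S : Set V} (hS : Bornology.IsBounded S) {u : Module.Dual ℝ V}
    (hu : ∀ x ∈ S, u x = 1) : Submodule.span ℝ (strictEffects S) = ⊤ := by
  refine eq_top_iff.2 fun f _ => ?_
  obtain ⟨C, hC⟩ :=
    (LinearMap.toContinuousLinearMap f).lipschitz.isBounded_image hS |>.exists_norm_le
  set M := max C 0 + 1
  have hM : 0 < M := by positivity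
  have hfM : ∀ x ∈ S, |f x| < M := fun x hx =>
    (hC _ (Set.mem_image_of_mem _ hx)).trans_lt (by linarith [le_max_left C 0])
  have h₁ : (4 * M)⁻¹ • (f + (2 * M) • u) ∈ strictEffects S := by
    intro x hx
    have := abs_lt.1 (hfM x hx)
    simp only [LinearMap.smul_apply, LinearMap.add_apply, smul_eq_mul, hu x hx, Set.mem_Ioo]
    constructor
    · exact mul_pos (by positivity) (by linarith)
    · rw [inv_mul_lt_iff₀ (by positivity)]
      linarith
  have h₂ : (2 : ℝ)⁻¹ • u ∈ strictEffects S := by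
    intro x hx
    norm_num [hu x hx]
  have : f = (4 * M) • ((4 * M)⁻¹ • (f + (2 * M) • u)) - (4 * M) • ((2 : ℝ)⁻¹ • u) := by
    rw [smul_inv_smul₀ (by positivity), smul_smul]; module
  rw [this]
  exact sub_mem (Submodule.smul_mem _ _ (Submodule.subset_span h₁))
    (Submodule.smul_mem _ _ (Submodule.subset_span h₂))

theorem sub_mem_strictEffects {V : Type*} [AddCommGroup V] [Module ℝ V] {S : Set V}
    {u e : Module.Dual ℝ V} (hu : ∀ x ∈ S, u x = 1) (he : e ∈ strictEffects S) :
    u - e ∈ strictEffects S := fun x hx => by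
  have := he x hx
  simp only [LinearMap.sub_apply, hu x hx, Set.mem_Ioo] at this ⊢
  constructor <;> linarith

theorem eq_tmul_of_conditional_mem {VA VB : Type*} [AddCommGroup VA] [Module ℝ VA]
    [NormedAddCommGroup VB] [NormedSpace ℝ VB] [FiniteDimensional ℝ VB]
    {SA : Set VA} {SB : Set VB} (hSB : Bornology.IsBounded SB)
    {uB : Module.Dual ℝ VB} (huB : ∀ y ∈ SB, uB y = 1)
    {ωA : VA} {ωB : VB} (hωA : ωA ∈ SA.extremePoints ℝ) (hωB : ωB ∈ SB) {x : VA ⊗[ℝ] VB}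
    (hxA : TensorProduct.rid ℝ VA (uB.lTensor VA x) = ωA)
    (hcond : ∀ e ∈ strictEffects SB, (e ωB)⁻¹ • TensorProduct.rid ℝ VA (e.lTensor VA x) ∈ SA) :
    x = ωA ⊗ₜ ωB := by
  let slice : Module.Dual ℝ VB →ₗ[ℝ] VA :=
    (TensorProduct.rid ℝ VA).toLinearMap ∘ₗ (LinearMap.lTensorHom VA).flip x
  have h_strict :
      Set.EqOn slice ((Module.Dual.eval ℝ VB ωB).smulRight ωA) (strictEffects SB) := by
    intro e he
    have hp := he ωB hωB
    have hcompl := sub_mem_strictEffects huB he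
    refine eq_smul_of_add_eq_mem_extremePoints (b := slice (uB - e)) hωA hp.1 hp.2
      (hcond e he) ?_ ?_
    · simpa [slice, huB ωB hωB] using hcond _ hcompl
    · simp [slice, ← hxA, LinearMap.lTensor_sub]
  have h_all := LinearMap.ext_on (span_strictEffects_eq_top hSB huB) h_strict
  refine TensorProduct.ext_of_rid_lTensor fun g => ?_
  simpa [slice] using LinearMap.congr_fun h_all g

theorem stmt_13_general {VA VB : Type*}
    [NormedAddCommGroup VA] [NormedSpace ℝ VA]
    [NormedAddCommGroup VB] [NormedSpace ℝ VB] [FiniteDimensional ℝ VB]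
    (SA : Set VA)
    (SB : Set VB) (hSBc : IsCompact SB)
    (uA : VA →ₗ[ℝ] ℝ) (huA : ∀ x ∈ SA, uA x = 1)
    (uB : VB →ₗ[ℝ] ℝ) (huB : ∀ x ∈ SB, uB x = 1)
    (SAB : Set (VA ⊗[ℝ] VB))
    (hunit : ∀ ω ∈ SAB, TensorProduct.lid ℝ ℝ (TensorProduct.map uA uB ω) = 1)
    (hcondA : ∀ ω ∈ SAB, ∀ EB : VB →ₗ[ℝ] ℝ, (∀ x ∈ SB, 0 ≤ EB x ∧ EB x ≤ 1) →
      ∀ lam : ℝ, lam = TensorProduct.lid ℝ ℝ (TensorProduct.map uA EB ω) → 0 < lam →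
      lam⁻¹ • (TensorProduct.rid ℝ VA)
        (TensorProduct.map (LinearMap.id : VA →ₗ[ℝ] VA) EB ω) ∈ SA)
    (hcondB : ∀ ω ∈ SAB, ∀ EA : VA →ₗ[ℝ] ℝ, (∀ x ∈ SA, 0 ≤ EA x ∧ EA x ≤ 1) →
      ∀ lam : ℝ, lam = TensorProduct.lid ℝ ℝ (TensorProduct.map EA uB ω) → 0 < lam →
      lam⁻¹ • (TensorProduct.lid ℝ VB)
        (TensorProduct.map EA (LinearMap.id : VB →ₗ[ℝ] VB) ω) ∈ SB)
    (ωA : VA) (hωA : ωA ∈ SA.extremePoints ℝ)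
    (ωB : VB) (hωB : ωB ∈ SB.extremePoints ℝ)
    (hprod : ωA ⊗ₜ[ℝ] ωB ∈ SAB) :
    ωA ⊗ₜ[ℝ] ωB ∈ SAB.extremePoints ℝ := by
  let margA := (TensorProduct.rid ℝ VA).toLinearMap ∘ₗ uB.lTensor VA
  let margB := (TensorProduct.lid ℝ VB).toLinearMap ∘ₗ uA.rTensor VB
  have hmargA : Set.MapsTo margA SAB SA := fun ω hω => by
    have h := hcondA ω hω uB (fun y hy => by simp [huB y hy]) 1 (hunit ω hω).symm one_pos
    rwa [inv_one, one_smul] at h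
  have hmargB : Set.MapsTo margB SAB SB := fun ω hω => by
    have h := hcondB ω hω uA (fun y hy => by simp [huA y hy]) 1 (hunit ω hω).symm one_pos
    rwa [inv_one, one_smul] at h
  refine ⟨hprod, fun ω hω ω' hω' hseg => ?_⟩
  have hωA' : margA (ωA ⊗ₜ ωB) = ωA := by simp [margA, huB ωB hωB.1]
  have hωB' : margB (ωA ⊗ₜ ωB) = ωB := by simp [margB, huA ωA hωA.1]
  have hω_A : margA ω = ωA :=
    hωA'.symm ▸ margA.apply_eq_of_mem_openSegment hmargA (hωA'.symm ▸ hωA) hω hω' hseg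
  have hω_B : margB ω = ωB :=
    hωB'.symm ▸ margB.apply_eq_of_mem_openSegment hmargB (hωB'.symm ▸ hωB) hω hω' hseg
  refine eq_tmul_of_conditional_mem hSBc.isBounded huB hωA hωB.1 hω_A fun e he => ?_
  have hprob : e ωB = TensorProduct.lid ℝ ℝ (TensorProduct.map uA e ω) := by
    rw [TensorProduct.lid_map_eq_apply_lid_rTensor, ← hω_B]; rfl
  exact hcondA ω hω e (fun y hy => ⟨(he y hy).1.le, (he y hy).2.le⟩) _ hprob (he ωB hωB.1).1

/-- In a composite whose conditional states are always valid local states,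
products of pure states are pure: if `ω_A` and `ω_B` are extreme points of the
local state spaces and `ω_A ⊗ ω_B` is a member of the composite state space,
then it is an extreme point of the composite state space. -/
theorem stmt_13 {VA VB : Type*}
    [NormedAddCommGroup VA] [NormedSpace ℝ VA] [FiniteDimensional ℝ VA]
    [NormedAddCommGroup VB] [NormedSpace ℝ VB] [FiniteDimensional ℝ VB]
    (SA : Set VA) (hSAc : IsCompact SA) (hSAconv : Convex ℝ SA)
    (SB : Set VB) (hSBc : IsCompact SB) (hSBconv : Convex ℝ SB)
    (uA : VA →ₗ[ℝ] ℝ) (huA : ∀ x ∈ SA, uA x = 1)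
    (uB : VB →ₗ[ℝ] ℝ) (huB : ∀ x ∈ SB, uB x = 1)
    (SAB : Set (VA ⊗[ℝ] VB)) (hSABconv : Convex ℝ SAB)
    (hunit : ∀ ω ∈ SAB, TensorProduct.lid ℝ ℝ (TensorProduct.map uA uB ω) = 1)
    (hcondA : ∀ ω ∈ SAB, ∀ EB : VB →ₗ[ℝ] ℝ, (∀ x ∈ SB, 0 ≤ EB x ∧ EB x ≤ 1) →
      ∀ lam : ℝ, lam = TensorProduct.lid ℝ ℝ (TensorProduct.map uA EB ω) → 0 < lam →
      lam⁻¹ • (TensorProduct.rid ℝ VA)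
        (TensorProduct.map (LinearMap.id : VA →ₗ[ℝ] VA) EB ω) ∈ SA)
    (hcondB : ∀ ω ∈ SAB, ∀ EA : VA →ₗ[ℝ] ℝ, (∀ x ∈ SA, 0 ≤ EA x ∧ EA x ≤ 1) →
      ∀ lam : ℝ, lam = TensorProduct.lid ℝ ℝ (TensorProduct.map EA uB ω) → 0 < lam →
      lam⁻¹ • (TensorProduct.lid ℝ VB)
        (TensorProduct.map EA (LinearMap.id : VB →ₗ[ℝ] VB) ω) ∈ SB)
    (ωA : VA) (hωA : ωA ∈ SA.extremePoints ℝ)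
    (ωB : VB) (hωB : ωB ∈ SB.extremePoints ℝ)
    (hprod : ωA ⊗ₜ[ℝ] ωB ∈ SAB) :
    ωA ⊗ₜ[ℝ] ωB ∈ SAB.extremePoints ℝ :=
  stmt_13_general SA SB hSBc uA huA uB huB SAB hunit hcondA hcondB ωA hωA ωB hωB hprod
end
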